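/- arXiv:1708.01799 — 2 statements merged into one kernel-verified Lean document; each statement's English description precedes it below -/
import Mathlib

section
/- Under the same setup, if Δ_I ≤ v then for any two subintervals I_1, I_2 ⊆ I and any π ∈ Π, the regrets Reg_{I'}(π) = max_{π'∈Π} R_{I'}(π') − R_{I'}(π) satisfy |Reg_{I_1}(π) − Reg_{I_2}(π)| ≤ 2v. -/
/-!
By telescoping, the rewards of a fixed policy at any two times of `[s, e]` differ by at most the
reward variation, hence so do its mean rewards over any two subintervals. The maximum over
policies is `1`-Lipschitz for the sup distance, so the best mean rewards differ by at most the
variation as well, and each regret, being a difference of these two quantities, moves by at most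
twice the variation.
-/

open Finset
open scoped BigOperators

section RewardVariation

variable {G : Type*} [AddCommGroup G] [LinearOrder G] [IsOrderedAddMonoid G]

theorem abs_sub_le_sum_Icc_abs_sub (f : ℕ → G) {a b : ℕ} (hab : a ≤ b) :
    |f b - f a| ≤ ∑ τ ∈ Icc (a + 1) b, |f τ - f (τ - 1)| := by
  have hshift : ∑ i ∈ Ico a b, |f (i + 1) - f i| = ∑ τ ∈ Icc (a + 1) b, |f τ - f (τ - 1)| := by
    simpa [Ico_add_one_right_eq_Icc] using sum_Ico_add' (fun τ => |f τ - f (τ - 1)|) a b 1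
  rw [← hshift, ← sum_Ico_sub f hab]
  exact abs_sum_le_sum_abs _ _

variable {P : Type*} [Fintype P] [Nonempty P]

def rewardVariation (R : ℕ → P → G) (s e : ℕ) : G :=
  ∑ τ ∈ Icc (s + 1) e, univ.sup' univ_nonempty fun π => |R τ π - R (τ - 1) π|

theorem abs_sub_le_rewardVariation (R : ℕ → P → G) {s e a b : ℕ} (ha : a ∈ Icc s e)
    (hb : b ∈ Icc s e) (π : P) : |R a π - R b π| ≤ rewardVariation R s e := by
  wlog hba : b ≤ a generalizing a b
  · rw [abs_sub_comm]
    exact this hb ha (by omega)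
  rw [mem_Icc] at ha hb
  calc |R a π - R b π| ≤ ∑ τ ∈ Icc (b + 1) a, |R τ π - R (τ - 1) π| :=
        abs_sub_le_sum_Icc_abs_sub (R · π) hba
    _ ≤ ∑ τ ∈ Icc (b + 1) a, univ.sup' univ_nonempty fun π => |R τ π - R (τ - 1) π| :=
        sum_le_sum fun τ _ => le_sup' (fun π => |R τ π - R (τ - 1) π|) (mem_univ π)
    _ ≤ rewardVariation R s e :=
        sum_le_sum_of_subset_of_nonneg (Icc_subset_Icc (by omega) (by omega)) fun τ _ _ =>
          le_sup'_of_le _ (mem_univ π) (abs_nonneg _)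

end RewardVariation

section Regret

variable {ι α : Type*} [Field α] [LinearOrder α] [IsStrictOrderedRing α]

theorem expect_le_expect_add {s t : Finset ι} (hs : s.Nonempty) (ht : t.Nonempty) {f : ι → α}
    {v : α} (h : ∀ a ∈ s, ∀ b ∈ t, f a ≤ f b + v) : 𝔼 i ∈ s, f i ≤ 𝔼 i ∈ t, f i + v :=
  expect_le hs fun a ha => sub_le_iff_le_add.1 <| le_expect ht fun b hb =>
    sub_le_iff_le_add.2 (h a ha b hb)

theorem abs_expect_sub_expect_le {s t : Finset ι} (hs : s.Nonempty) (ht : t.Nonempty)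
    {f : ι → α} {v : α} (h : ∀ a ∈ s, ∀ b ∈ t, |f a - f b| ≤ v) :
    |𝔼 i ∈ s, f i - 𝔼 i ∈ t, f i| ≤ v := by
  rw [abs_sub_le_iff, sub_le_iff_le_add', sub_le_iff_le_add']
  exact ⟨expect_le_expect_add hs ht fun a ha b hb =>
      sub_le_iff_le_add'.1 (abs_sub_le_iff.1 (h a ha b hb)).1,
    expect_le_expect_add ht hs fun b hb a ha =>
      sub_le_iff_le_add'.1 (abs_sub_le_iff.1 (h a ha b hb)).2⟩

theorem abs_sup'_sub_sup'_le {s : Finset ι} (hs : s.Nonempty) {f g : ι → α} {v : α}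
    (h : ∀ i ∈ s, |f i - g i| ≤ v) : |s.sup' hs f - s.sup' hs g| ≤ v := by
  rw [abs_sub_le_iff, sub_le_iff_le_add, sub_le_iff_le_add]
  constructor
  · refine sup'_le hs f fun i hi => ?_
    linarith [le_sup' g hi, abs_le.1 (h i hi)]
  · refine sup'_le hs g fun i hi => ?_
    linarith [le_sup' f hi, abs_le.1 (h i hi)]

variable {P : Type*} [Fintype P] [Nonempty P]

def regret (R : ι → P → α) (s : Finset ι) (π : P) : α :=
  (univ.sup' univ_nonempty fun π' => 𝔼 i ∈ s, R i π') - 𝔼 i ∈ s, R i π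

theorem abs_regret_sub_regret_le (R : ι → P → α) {s t : Finset ι} (hs : s.Nonempty)
    (ht : t.Nonempty) {v : α} (h : ∀ π, ∀ a ∈ s, ∀ b ∈ t, |R a π - R b π| ≤ v) (π : P) :
    |regret R s π - regret R t π| ≤ 2 * v := by
  have hmean : ∀ π', |𝔼 i ∈ s, R i π' - 𝔼 i ∈ t, R i π'| ≤ v := fun π' =>
    abs_expect_sub_expect_le hs ht (h π')
  have hmax := abs_sup'_sub_sup'_le univ_nonempty fun π' _ => hmean π'
  rw [regret, regret, sub_sub_sub_comm, two_mul]
  exact (abs_sub _ _).trans (add_le_add hmax (hmean π))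

end Regret

theorem regret_diff_le_two_variation_general
    {P : Type*} [Fintype P] [Nonempty P]
    (R : ℕ → P → ℝ)
    (v : ℝ)
    (s e s₁ e₁ s₂ e₂ : ℕ)
    (h1l : s ≤ s₁) (h1 : s₁ ≤ e₁) (h1r : e₁ ≤ e)
    (h2l : s ≤ s₂) (h2 : s₂ ≤ e₂) (h2r : e₂ ≤ e)
    (hΔ : ∑ τ ∈ Finset.Icc (s+1) e,
        (Finset.univ.sup' Finset.univ_nonempty fun π => |R τ π - R (τ-1) π|) ≤ v)
    (π : P) :
    |((Finset.univ.sup' Finset.univ_nonempty fun π' =>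
          (∑ t ∈ Finset.Icc s₁ e₁, R t π') / ((Finset.Icc s₁ e₁).card : ℝ))
        - (∑ t ∈ Finset.Icc s₁ e₁, R t π) / ((Finset.Icc s₁ e₁).card : ℝ))
      - ((Finset.univ.sup' Finset.univ_nonempty fun π' =>
          (∑ t ∈ Finset.Icc s₂ e₂, R t π') / ((Finset.Icc s₂ e₂).card : ℝ))
        - (∑ t ∈ Finset.Icc s₂ e₂, R t π) / ((Finset.Icc s₂ e₂).card : ℝ))| ≤ 2 * v := by
  simp only [← expect_eq_sum_div_card]
  refine abs_regret_sub_regret_le R (nonempty_Icc.2 h1) (nonempty_Icc.2 h2)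
    (fun π' a ha b hb => (abs_sub_le_rewardVariation R ?_ ?_ π').trans hΔ) π
  · exact Icc_subset_Icc h1l h1r ha
  · exact Icc_subset_Icc h2l h2r hb

/-- If the reward variation of `R` over `[s, e]` is at most `v`, then the regrets
`Reg_{I'}(π) = max_{π'} R_{I'}(π') - R_{I'}(π)` over any two subintervals of `[s, e]`
differ by at most `2v`. -/
theorem regret_diff_le_two_variation
    {P : Type*} [Fintype P] [Nonempty P]
    (R : ℕ → P → ℝ) (hR : ∀ t π, R t π ∈ Set.Icc (0:ℝ) 1)
    (v : ℝ)
    (s e s₁ e₁ s₂ e₂ : ℕ)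
    (h1l : s ≤ s₁) (h1 : s₁ ≤ e₁) (h1r : e₁ ≤ e)
    (h2l : s ≤ s₂) (h2 : s₂ ≤ e₂) (h2r : e₂ ≤ e)
    (hΔ : ∑ τ ∈ Finset.Icc (s+1) e,
        (Finset.univ.sup' Finset.univ_nonempty fun π => |R τ π - R (τ-1) π|) ≤ v)
    (π : P) :
    |((Finset.univ.sup' Finset.univ_nonempty fun π' =>
          (∑ t ∈ Finset.Icc s₁ e₁, R t π') / ((Finset.Icc s₁ e₁).card : ℝ))
        - (∑ t ∈ Finset.Icc s₁ e₁, R t π) / ((Finset.Icc s₁ e₁).card : ℝ))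
      - ((Finset.univ.sup' Finset.univ_nonempty fun π' =>
          (∑ t ∈ Finset.Icc s₂ e₂, R t π') / ((Finset.Icc s₂ e₂).card : ℝ))
        - (∑ t ∈ Finset.Icc s₂ e₂, R t π) / ((Finset.Icc s₂ e₂).card : ℝ))| ≤ 2 * v :=
  regret_diff_le_two_variation_general R v s e s₁ e₁ s₂ e₂ h1l h1 h1r h2l h2 h2r hΔ π
end

section
/- Let positive reals e_1, …, e_m satisfy Σ_i e_i ≤ T and suppose each satisfies d_i ≥ c·e_i^{−γ/2} for constants c > 0 and γ ∈ (0,1), where d_i ≥ 0 and Σ_i d_i ≤ Δ. Then m ≤ c^{−2/(2+γ)} Δ^{2/(2+γ)} T^{γ/(2+γ)}. -/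
/-!
Write `1 = e^{-γ/(2+γ)} · e^{γ/(2+γ)}` and apply Hölder's inequality with the conjugate exponents
`(2+γ)/2` and `(2+γ)/γ`: this bounds the number of terms by `(Σ e^{-γ/2})^{2/(2+γ)} (Σ e)^{γ/(2+γ)}`,
and the lower bound on `d` gives `Σ e^{-γ/2} ≤ Δ / c`.
-/

open Finset

theorem Real.card_le_sum_rpow_neg_mul_sum {ι : Type*} (s : Finset ι) {f : ι → ℝ}
    (hf : ∀ i ∈ s, 0 < f i) {a : ℝ} (ha : 0 < a) :
    (#s : ℝ) ≤ (∑ i ∈ s, f i ^ (-a)) ^ (1 / (1 + a)) * (∑ i ∈ s, f i) ^ (a / (1 + a)) := by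
  have hpq : (1 + a).HolderConjugate ((1 + a) / a) := by
    rw [Real.holderConjugate_iff]
    exact ⟨by linarith, by field_simp⟩
  have hholder := Real.inner_le_Lp_mul_Lq_of_nonneg s hpq
    (f := fun i => f i ^ (-(a / (1 + a)))) (g := fun i => f i ^ (a / (1 + a)))
    (fun i hi => (Real.rpow_pos_of_pos (hf i hi) _).le)
    (fun i hi => (Real.rpow_pos_of_pos (hf i hi) _).le)
  calc (#s : ℝ) = ∑ i ∈ s, f i ^ (-(a / (1 + a))) * f i ^ (a / (1 + a)) := by
        rw [card_eq_sum_ones, Nat.cast_sum, Nat.cast_one]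
        refine sum_congr rfl fun i hi => ?_
        rw [← Real.rpow_add (hf i hi), neg_add_cancel, Real.rpow_zero]
    _ ≤ _ := hholder
    _ = _ := by
        rw [one_div_div]
        congr 2 <;> refine sum_congr rfl fun i hi => ?_
        · rw [← Real.rpow_mul (hf i hi).le]
          congr 1
          field_simp
        · rw [← Real.rpow_mul (hf i hi).le, div_mul_div_comm, mul_comm a,
            div_self (by positivity), Real.rpow_one]

theorem epoch_count_le_holder_general
    (m : ℕ) (e d : Fin m → ℝ)
    (he : ∀ i, 0 < e i)
    (c γ : ℝ) (hc : 0 < c) (hγ : γ ∈ Set.Ioo (0:ℝ) 1)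
    (T Δ : ℝ) (hT : ∑ i, e i ≤ T) (hΔ : ∑ i, d i ≤ Δ)
    (hlb : ∀ i, c * (e i) ^ (-(γ / 2)) ≤ d i) :
    (m : ℝ) ≤ c ^ (-(2 / (2 + γ))) * Δ ^ (2 / (2 + γ)) * T ^ (γ / (2 + γ)) := by
  have hγ0 : 0 < γ := hγ.1
  have hsum_neg : ∑ i, e i ^ (-(γ / 2)) ≤ Δ / c := by
    rw [le_div_iff₀ hc, sum_mul]
    exact (sum_le_sum fun i _ => by rw [mul_comm]; exact hlb i).trans hΔ
  have hsum_neg_nonneg : 0 ≤ ∑ i, e i ^ (-(γ / 2)) :=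
    sum_nonneg fun i _ => (Real.rpow_pos_of_pos (he i) _).le
  have hΔ0 : 0 ≤ Δ := by
    simpa [div_mul_cancel₀ Δ hc.ne'] using mul_nonneg (hsum_neg_nonneg.trans hsum_neg) hc.le
  have hholder := Real.card_le_sum_rpow_neg_mul_sum univ (fun i _ => he i) (half_pos hγ0)
  have hp : 1 / (1 + γ / 2) = 2 / (2 + γ) := by field_simp
  have hq : γ / 2 / (1 + γ / 2) = γ / (2 + γ) := by field_simp
  rw [card_univ, Fintype.card_fin, hp, hq] at hholder
  calc (m : ℝ) ≤ _ := hholder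
    _ ≤ (Δ / c) ^ (2 / (2 + γ)) * T ^ (γ / (2 + γ)) := by
        have hsum_nonneg : 0 ≤ ∑ i, e i := sum_nonneg fun i _ => (he i).le
        gcongr
    _ = c ^ (-(2 / (2 + γ))) * Δ ^ (2 / (2 + γ)) * T ^ (γ / (2 + γ)) := by
        rw [Real.div_rpow hΔ0 hc.le, Real.rpow_neg hc.le, div_eq_mul_inv]
        ring

/-- Hölder argument bounding the number of drift-triggered epochs: if `Σ e i ≤ T`,
`d i ≥ c * (e i)^{-γ/2}` with `Σ d i ≤ Δ`, then
`m ≤ c^{-2/(2+γ)} Δ^{2/(2+γ)} T^{γ/(2+γ)}`. -/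
theorem epoch_count_le_holder
    (m : ℕ) (e d : Fin m → ℝ)
    (he : ∀ i, 0 < e i) (hd : ∀ i, 0 ≤ d i)
    (c γ : ℝ) (hc : 0 < c) (hγ : γ ∈ Set.Ioo (0:ℝ) 1)
    (T Δ : ℝ) (hT : ∑ i, e i ≤ T) (hΔ : ∑ i, d i ≤ Δ)
    (hlb : ∀ i, c * (e i) ^ (-(γ / 2)) ≤ d i) :
    (m : ℝ) ≤ c ^ (-(2 / (2 + γ))) * Δ ^ (2 / (2 + γ)) * T ^ (γ / (2 + γ)) :=
  epoch_count_le_holder_general m e d he c γ hc hγ T Δ hT hΔ hlb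
end
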